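/- Applying the Pauli-twirled amplitude damping channel (a Pauli channel with p_X = p_Y) n₁ times locally to both qubits of Φ+ yields the Bell-diagonal state with diagonal Bell coefficients ((1+e^{-2n₁/m⋆}+2e^{-n₁/m⋆})/4, (1+e^{-2n₁/m⋆}−2e^{-n₁/m⋆})/4, (1−e^{-2n₁/m⋆})/4, (1−e^{-2n₁/m⋆})/4) on (Φ00, Φ01, Φ10, Φ11), where e^{-1/m⋆} = 1−γ. -/
import Mathlib


open Matrix Kronecker BigOperators

noncomputable section

def pI : Matrix (Fin 2) (Fin 2) ℂ := 1
def pX : Matrix (Fin 2) (Fin 2) ℂ := !![0, 1; 1, 0]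
def pY : Matrix (Fin 2) (Fin 2) ℂ := !![0, -Complex.I; Complex.I, 0]
def pZ : Matrix (Fin 2) (Fin 2) ℂ := !![1, 0; 0, -1]

def K0 (γ : ℝ) : Matrix (Fin 2) (Fin 2) ℂ := !![1, 0; 0, (Real.sqrt (1 - γ) : ℂ)]
def K1 (γ : ℝ) : Matrix (Fin 2) (Fin 2) ℂ := !![0, (Real.sqrt γ : ℂ); 0, 0]

/-- The amplitude damping channel on one qubit. -/
def AD (γ : ℝ) (ρ : Matrix (Fin 2) (Fin 2) ℂ) : Matrix (Fin 2) (Fin 2) ℂ :=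
  K0 γ * ρ * (K0 γ)ᴴ + K1 γ * ρ * (K1 γ)ᴴ

abbrev Q2 := Fin 2 × Fin 2

/-- The Bell state |Φ⁺⟩ = (|00⟩+|11⟩)/√2. -/
def φplus : Q2 → ℂ := fun p => if p.1 = p.2 then ((Real.sqrt 2 : ℂ))⁻¹ else 0

/-- |Φxz⟩ = (I ⊗ XˣZᶻ)|Φ⁺⟩. -/
def bell (x z : Fin 2) : Q2 → ℂ :=
  ((1 : Matrix (Fin 2) (Fin 2) ℂ) ⊗ₖ (pX ^ (x : ℕ) * pZ ^ (z : ℕ))).mulVec φplus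

/-- |v⟩⟨w|. -/
def outer (v w : Q2 → ℂ) : Matrix Q2 Q2 ℂ := vecMulVec v (star w)

/-- |v⟩⟨v|. -/
def proj (v : Q2 → ℂ) : Matrix Q2 Q2 ℂ := outer v v

/-- The amplitude damping channel acting locally on both qubits. -/
def AD2 (γ : ℝ) (ρ : Matrix Q2 Q2 ℂ) : Matrix Q2 Q2 ℂ :=
  (K0 γ ⊗ₖ K0 γ) * ρ * (K0 γ ⊗ₖ K0 γ)ᴴ + (K0 γ ⊗ₖ K1 γ) * ρ * (K0 γ ⊗ₖ K1 γ)ᴴ +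
  (K1 γ ⊗ₖ K0 γ) * ρ * (K1 γ ⊗ₖ K0 γ)ᴴ + (K1 γ ⊗ₖ K1 γ) * ρ * (K1 γ ⊗ₖ K1 γ)ᴴ

/-- Three-parameter link state. -/
def σ3 (c1 c2 c3 : ℝ) : Matrix Q2 Q2 ℂ :=
  (c1 : ℂ) • proj (bell 0 0) + (c2 : ℂ) • proj (bell 0 1) +
  (c3 : ℂ) • (outer (bell 0 0) (bell 0 1) + outer (bell 0 1) (bell 0 0)) +
  (((1 - c1 - c2) / 2 : ℝ) : ℂ) • (proj (bell 1 0) + proj (bell 1 1))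

/-- Four-parameter AQN link state. -/
def σ4 (h1 h2 h3 h4 : ℝ) : Matrix Q2 Q2 ℂ :=
  σ3 h1 h2 h3 + (h4 : ℂ) • (outer (bell 1 0) (bell 1 1) + outer (bell 1 1) (bell 1 0))

abbrev Q4 := Q2 × Q2

/-- ⟨Φxz|_{Q₁Q₂} ⊗ XˣZᶻ_R as a matrix from the four-qubit space P Q₁ Q₂ R to P R. -/
def braB (x z : Fin 2) : Matrix Q2 Q4 ℂ :=
  Matrix.of fun pr q =>
    (if pr.1 = q.1.1 then (1 : ℂ) else 0) *
      (starRingEnd ℂ) (bell x z (q.1.2, q.2.1)) * (pX ^ (x : ℕ) * pZ ^ (z : ℕ)) pr.2 q.2.2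

/-- The entanglement swapping map. -/
def swapMap (ρ : Matrix Q4 Q4 ℂ) : Matrix Q2 Q2 ℂ :=
  ∑ x : Fin 2, ∑ z : Fin 2, braB x z * ρ * (braB x z)ᴴ

/-- Probabilities of the Pauli-twirled amplitude damping channel. -/
def twProb (γ : ℝ) : Fin 4 → ℝ :=
  ![(1 + Real.sqrt (1 - γ)) / 2 - γ / 4, γ / 4, γ / 4, (1 - Real.sqrt (1 - γ)) / 2 - γ / 4]

/-- The four Pauli matrices. -/
def pauli : Fin 4 → Matrix (Fin 2) (Fin 2) ℂ := ![pI, pX, pY, pZ]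

/-- The twirled channel acting locally on both qubits. -/
def twAD2 (γ : ℝ) (ρ : Matrix Q2 Q2 ℂ) : Matrix Q2 Q2 ℂ :=
  ∑ i : Fin 4, ∑ j : Fin 4, ((twProb γ i * twProb γ j : ℝ) : ℂ) •
    ((pauli i ⊗ₖ pauli j) * ρ * (pauli i ⊗ₖ pauli j)ᴴ)



lemma conj_outer (M : Matrix Q2 Q2 ℂ) (v w : Q2 → ℂ) :
    M * outer v w * Mᴴ = outer (M.mulVec v) (M.mulVec w) := by
  ext p q
  simp only [outer, vecMulVec_apply, Matrix.mul_apply, conjTranspose_apply, mulVec, dotProduct,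
    Pi.star_apply, star_sum, star_mul', Finset.mul_sum, Finset.sum_mul]
  refine Finset.sum_congr rfl fun t _ => Finset.sum_congr rfl fun r _ => by ring

def xb : Fin 4 → Fin 2 := ![0,1,1,0]
def zb : Fin 4 → Fin 2 := ![0,0,1,1]

def bv (a b c d : ℂ) : Q2 → ℂ :=
  fun p => if p.1 = 0 then (if p.2 = 0 then a else b) else (if p.2 = 0 then c else d)

def r2 : ℂ := ((Real.sqrt 2 : ℂ))⁻¹

lemma bell_tab (x z : Fin 2) : bell x z =
    ![![bv r2 0 0 r2, bv r2 0 0 (-r2)], ![bv 0 r2 r2 0, bv 0 r2 (-r2) 0]] x z := by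
  fin_cases x <;> fin_cases z <;>
  · funext p
    obtain ⟨i,j⟩ := p
    fin_cases i <;> fin_cases j <;>
      simp [bell, mulVec, φplus, pX, pZ, dotProduct, Fintype.sum_prod_type, bv, r2,
        kroneckerMap_apply, Fin.sum_univ_succ, Matrix.one_apply, pow_succ, Matrix.mul_apply]

def ph : Fin 4 → Fin 4 → Fin 2 → Fin 2 → ℂ :=
  ![![![![1, 1], ![1, 1]], ![![1, 1], ![1, 1]], ![![Complex.I, Complex.I], ![-Complex.I, -Complex.I]], ![![1, 1], ![-1, -1]]],
   ![![![1, -1], ![1, -1]], ![![1, -1], ![1, -1]], ![![-Complex.I, Complex.I], ![Complex.I, -Complex.I]], ![![-1, 1], ![1, -1]]],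
   ![![![-Complex.I, Complex.I], ![-Complex.I, Complex.I]], ![![-Complex.I, Complex.I], ![-Complex.I, Complex.I]], ![![-1, 1], ![1, -1]], ![![Complex.I, -Complex.I], ![-Complex.I, Complex.I]]],
   ![![![1, 1], ![1, 1]], ![![1, 1], ![1, 1]], ![![Complex.I, Complex.I], ![-Complex.I, -Complex.I]], ![![1, 1], ![-1, -1]]]]


lemma proj_smul (c : ℂ) (v : Q2 → ℂ) : proj (c • v) = (c * star c) • proj v := by
  ext p q
  simp [proj, outer, vecMulVec_apply, mul_comm, mul_assoc, mul_left_comm]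

lemma ph_unit (i j : Fin 4) (x z : Fin 2) : ph i j x z * star (ph i j x z) = 1 := by
  fin_cases i <;> fin_cases j <;> fin_cases x <;> fin_cases z <;>
    simp [ph, Complex.star_def]

set_option maxHeartbeats 2000000 in
lemma keyvec (i j : Fin 4) (x z : Fin 2) :
    (pauli i ⊗ₖ pauli j).mulVec (bell x z) =
      ph i j x z • bell (x + xb i + xb j) (z + zb i + zb j) := by
  fin_cases i <;> fin_cases j <;> fin_cases x <;> fin_cases z <;>
  · funext p
    obtain ⟨p1,p2⟩ := p
    fin_cases p1 <;> fin_cases p2 <;>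
      simp [ph, bell_tab, bv, mulVec, dotProduct, Fintype.sum_prod_type, kroneckerMap_apply,
        Fin.sum_univ_succ, pauli, pI, pX, pY, pZ, xb, zb, Matrix.one_apply, Matrix.mul_apply]

lemma key (i j : Fin 4) (x z : Fin 2) :
    proj ((pauli i ⊗ₖ pauli j).mulVec (bell x z)) =
      proj (bell (x + xb i + xb j) (z + zb i + zb j)) := by
  rw [keyvec, proj_smul, ph_unit, one_smul]

lemma twAD2_proj (γ : ℝ) (v : Q2 → ℂ) :
    twAD2 γ (proj v) = ∑ i : Fin 4, ∑ j : Fin 4, ((twProb γ i * twProb γ j : ℝ):ℂ) •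
      proj ((pauli i ⊗ₖ pauli j).mulVec v) := by
  simp only [twAD2, proj, conj_outer]

lemma twAD2_bell (γ : ℝ) (h1 : γ ≤ 1) (x z : Fin 2) :
    twAD2 γ (proj (bell x z)) =
      ((1 - γ + γ^2/4 : ℝ):ℂ) • proj (bell x z) + ((γ^2/4 : ℝ):ℂ) • proj (bell x (z+1)) +
      ((γ/2 - γ^2/4 : ℝ):ℂ) • (proj (bell (x+1) z) + proj (bell (x+1) (z+1))) := by
  have hs : ((Real.sqrt (1-γ) : ℝ):ℂ)^2 = 1 - (γ:ℂ) := by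
    exact_mod_cast Real.sq_sqrt (by linarith : (0:ℝ) ≤ 1-γ)
  rw [twAD2_proj]
  simp only [Fin.sum_univ_four, key, xb, zb, Matrix.cons_val_zero, Matrix.cons_val_one,
    Matrix.head_cons, Matrix.cons_val_two, Matrix.tail_cons, Matrix.cons_val_three,
    add_zero, twProb]
  have e1 : ∀ w : Fin 2, w + 1 + 1 = w := by decide
  have e2 : ∀ w : Fin 2, w + 0 = w := by decide
  simp only [e1, e2]
  match_scalars <;> push_cast <;> ring_nf <;> simp only [hs] <;> try ring

lemma twAD2_add (γ : ℝ) (ρ σ : Matrix Q2 Q2 ℂ) :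
    twAD2 γ (ρ + σ) = twAD2 γ ρ + twAD2 γ σ := by
  simp only [twAD2, Matrix.mul_add, Matrix.add_mul, smul_add, Finset.sum_add_distrib]

lemma twAD2_smul (γ : ℝ) (r : ℂ) (ρ : Matrix Q2 Q2 ℂ) :
    twAD2 γ (r • ρ) = r • twAD2 γ ρ := by
  simp only [twAD2, Matrix.mul_smul, Matrix.smul_mul, smul_comm r, Finset.smul_sum]


/-- n₁-fold local application of the Pauli-twirled amplitude damping channel on both
qubits of Φ⁺ gives the Bell-diagonal state with coefficients
((1+q²+2q)/4, (1+q²−2q)/4, (1−q²)/4, (1−q²)/4), where q = (1−γ)^{n₁} (= e^{−n₁/m⋆}). -/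
theorem twirled_adc_on_bell (γ : ℝ) (h0 : 0 ≤ γ) (h1 : γ ≤ 1) (n₁ : ℕ) :
    (twAD2 γ)^[n₁] (proj (bell 0 0)) =
      (((1 + ((1 - γ) ^ n₁) ^ 2 + 2 * (1 - γ) ^ n₁) / 4 : ℝ) : ℂ) • proj (bell 0 0) +
      (((1 + ((1 - γ) ^ n₁) ^ 2 - 2 * (1 - γ) ^ n₁) / 4 : ℝ) : ℂ) • proj (bell 0 1) +
      (((1 - ((1 - γ) ^ n₁) ^ 2) / 4 : ℝ) : ℂ) • (proj (bell 1 0) + proj (bell 1 1)) := by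
  induction n₁ with
  | zero =>
      norm_num
  | succ n ih =>
      rw [Function.iterate_succ_apply', ih]
      rw [twAD2_add, twAD2_add, twAD2_smul, twAD2_smul, twAD2_smul, twAD2_add,
        twAD2_bell γ h1 0 0, twAD2_bell γ h1 0 1, twAD2_bell γ h1 1 0, twAD2_bell γ h1 1 1]
      have e1 : ((0:Fin 2)+1) = 1 := rfl
      have e2 : ((1:Fin 2)+1) = 0 := rfl
      simp only [e1, e2]
      match_scalars <;> push_cast <;> ring
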